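/- The joint Ridge-regularized fsFGW problem reduces to an optimization over the transport plan alone: inf{ F_R(T,w) : T ∈ U(a,b), w ∈ [0,1]^d } = inf{ Σ_{r=1}^d g(s_r(T)) + α GW(T) : T ∈ U(a,b) }, where g(s) = (1−α)s − (1−α)²s²/(2λ) when (1−α)s ≤ λ and g(s) = λ/2 when (1−α)s > λ. -/

import Mathlib

/-!
For a fixed plan `T`, the Ridge objective separates over the features: the `r`-th summand
`(1 - α)(1 - w_r) s_r(T) + (λ/2) w_r²` is a convex quadratic in `w_r`, minimised over `[0, 1]` at
the clipped stationary point `w_r = min(1, (1 - α) s_r(T) / λ)`, with minimum value `g(s_r(T))`.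
Minimising jointly over `(T, w)` is therefore the same as minimising over `T` the partial
minimum `Σ_r g(s_r(T)) + α GW(T)`.
-/

/-- A probability vector: nonnegative entries summing to 1. -/
def IsProb {n : ℕ} (a : Fin n → ℝ) : Prop := (∀ i, 0 ≤ a i) ∧ ∑ i, a i = 1

/-- Membership in the transport polytope U(a,b). -/
def InU {n m : ℕ} (a : Fin n → ℝ) (b : Fin m → ℝ) (T : Matrix (Fin n) (Fin m) ℝ) : Prop :=
  (∀ i j, 0 ≤ T i j) ∧ (∀ i, ∑ j, T i j = a i) ∧ (∀ j, ∑ i, T i j = b j)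

/-- Feature score `s_r(T) = Σ_{i,j} T_{ij} |X_{ir} − Y_{jr}|^q`. -/
noncomputable def score {n m d : ℕ} (q : ℝ) (X : Matrix (Fin n) (Fin d) ℝ)
    (Y : Matrix (Fin m) (Fin d) ℝ) (T : Matrix (Fin n) (Fin m) ℝ) (r : Fin d) : ℝ :=
  ∑ i, ∑ j, T i j * |X i r - Y j r| ^ q

/-- Gromov–Wasserstein term `GW(T) = Σ |C^X_{ii'} − C^Y_{jj'}|^q T_{ij} T_{i'j'}`. -/
noncomputable def gwTerm {n m : ℕ} (q : ℝ) (CX : Matrix (Fin n) (Fin n) ℝ)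
    (CY : Matrix (Fin m) (Fin m) ℝ) (T : Matrix (Fin n) (Fin m) ℝ) : ℝ :=
  ∑ i, ∑ i', ∑ j, ∑ j', |CX i i' - CY j j'| ^ q * T i j * T i' j'

/-- Ridge-regularized fsFGW objective. -/
noncomputable def FR {n m d : ℕ} (q α lam : ℝ)
    (CX : Matrix (Fin n) (Fin n) ℝ) (CY : Matrix (Fin m) (Fin m) ℝ)
    (X : Matrix (Fin n) (Fin d) ℝ) (Y : Matrix (Fin m) (Fin d) ℝ)
    (T : Matrix (Fin n) (Fin m) ℝ) (w : Fin d → ℝ) : ℝ :=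
  (1 - α) * ∑ r, (1 - w r) * score q X Y T r + α * gwTerm q CX CY T
    + lam / 2 * ∑ r, (w r) ^ 2

/-- Reduced per-feature Ridge cost `g`. -/
noncomputable def ridgeG (α lam s : ℝ) : ℝ :=
  if (1 - α) * s ≤ lam then (1 - α) * s - (1 - α) ^ 2 * s ^ 2 / (2 * lam)
  else lam / 2

lemma sInf_joint_eq_sInf_of_partial_min {ι κ : Type*} (P : ι → Prop) (Q : κ → Prop)
    (f : ι → κ → ℝ) (g : ι → ℝ) (hle : ∀ x, P x → ∀ w, Q w → g x ≤ f x w)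
    (hex : ∀ x, P x → ∃ w, Q w ∧ f x w = g x) :
    sInf {v : ℝ | ∃ x w, P x ∧ Q w ∧ v = f x w} = sInf {v : ℝ | ∃ x, P x ∧ v = g x} := by
  apply csInf_eq_csInf_of_forall_exists_le
  · rintro _ ⟨x, w, hx, hw, rfl⟩
    exact ⟨g x, ⟨x, hx, rfl⟩, hle x hx w hw⟩
  · rintro _ ⟨x, hx, rfl⟩
    obtain ⟨w, hw, hfg⟩ := hex x hx
    exact ⟨f x w, ⟨x, w, hx, hw, rfl⟩, hfg.le⟩

noncomputable def ridgeCost (α lam s w : ℝ) : ℝ := (1 - α) * ((1 - w) * s) + lam / 2 * w ^ 2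

lemma ridgeG_le_ridgeCost {α lam s w : ℝ} (hlam : 0 < lam) (hw : w ≤ 1) :
    ridgeG α lam s ≤ ridgeCost α lam s w := by
  unfold ridgeG ridgeCost
  split_ifs with h
  -- the gap is the completed square `(λ w - (1 - α) s)² / (2λ)`
  · have hdiv : (1 - α) ^ 2 * s ^ 2 / (2 * lam) * (2 * lam) = (1 - α) ^ 2 * s ^ 2 :=
      div_mul_cancel₀ _ (by positivity)
    nlinarith [sq_nonneg (lam * w - (1 - α) * s)]
  · rw [not_le] at h
    nlinarith [sq_nonneg (1 - w), mul_le_mul_of_nonneg_left h.le (sub_nonneg.2 hw)]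

lemma exists_ridgeCost_eq_ridgeG {α lam s : ℝ} (hlam : 0 < lam) (hs : 0 ≤ (1 - α) * s) :
    ∃ w ∈ Set.Icc (0 : ℝ) 1, ridgeCost α lam s w = ridgeG α lam s := by
  unfold ridgeG ridgeCost
  by_cases h : (1 - α) * s ≤ lam
  · refine ⟨(1 - α) * s / lam, ⟨div_nonneg hs hlam.le, (div_le_one hlam).2 h⟩, ?_⟩
    rw [if_pos h]
    field_simp
    ring
  · exact ⟨1, ⟨zero_le_one, le_rfl⟩, by rw [if_neg h]; ring⟩

lemma score_nonneg {n m d : ℕ} (q : ℝ) (X : Matrix (Fin n) (Fin d) ℝ)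
    (Y : Matrix (Fin m) (Fin d) ℝ) {T : Matrix (Fin n) (Fin m) ℝ}
    (hT : ∀ i j, 0 ≤ T i j) (r : Fin d) : 0 ≤ score q X Y T r :=
  Finset.sum_nonneg fun i _ => Finset.sum_nonneg fun j _ =>
    mul_nonneg (hT i j) (Real.rpow_nonneg (abs_nonneg _) q)

lemma FR_eq_sum_ridgeCost {n m d : ℕ} (q α lam : ℝ)
    (CX : Matrix (Fin n) (Fin n) ℝ) (CY : Matrix (Fin m) (Fin m) ℝ)
    (X : Matrix (Fin n) (Fin d) ℝ) (Y : Matrix (Fin m) (Fin d) ℝ)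
    (T : Matrix (Fin n) (Fin m) ℝ) (w : Fin d → ℝ) :
    FR q α lam CX CY X Y T w =
      (∑ r, ridgeCost α lam (score q X Y T r) (w r)) + α * gwTerm q CX CY T := by
  unfold FR ridgeCost
  rw [Finset.sum_add_distrib, Finset.mul_sum, Finset.mul_sum]
  ring

theorem ridge_fsFGW_reduction_general (n m d : ℕ)
    (q : ℝ) (α lam : ℝ) (hα : α ∈ Set.Icc (0:ℝ) 1) (hlam : 0 < lam)
    (a : Fin n → ℝ) (b : Fin m → ℝ)
    (CX : Matrix (Fin n) (Fin n) ℝ) (CY : Matrix (Fin m) (Fin m) ℝ)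
    (X : Matrix (Fin n) (Fin d) ℝ) (Y : Matrix (Fin m) (Fin d) ℝ) :
    sInf {v : ℝ | ∃ T w, InU a b T ∧ (∀ r, w r ∈ Set.Icc (0:ℝ) 1) ∧
        v = FR q α lam CX CY X Y T w}
      = sInf {v : ℝ | ∃ T, InU a b T ∧
        v = (∑ r, ridgeG α lam (score q X Y T r)) + α * gwTerm q CX CY T} := by
  refine sInf_joint_eq_sInf_of_partial_min _ _ _ _ ?_ ?_
  · intro T _ w hw
    rw [FR_eq_sum_ridgeCost]
    gcongr with r
    exact ridgeG_le_ridgeCost hlam (hw r).2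
  · intro T hT
    choose w hw hcost using fun r => exists_ridgeCost_eq_ridgeG (α := α) hlam
      (mul_nonneg (sub_nonneg.2 hα.2) (score_nonneg q X Y hT.1 r))
    exact ⟨w, hw, by simp only [FR_eq_sum_ridgeCost, hcost]⟩

/-- the joint Ridge fsFGW problem reduces to an optimization
over the transport plan alone, with per-feature cost `g`. -/
theorem ridge_fsFGW_reduction (n m d : ℕ) (hn : 1 ≤ n) (hm : 1 ≤ m) (hd : 1 ≤ d)
    (q : ℝ) (hq : 1 ≤ q) (α lam : ℝ) (hα : α ∈ Set.Icc (0:ℝ) 1) (hlam : 0 < lam)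
    (a : Fin n → ℝ) (b : Fin m → ℝ) (ha : IsProb a) (hb : IsProb b)
    (CX : Matrix (Fin n) (Fin n) ℝ) (CY : Matrix (Fin m) (Fin m) ℝ)
    (X : Matrix (Fin n) (Fin d) ℝ) (Y : Matrix (Fin m) (Fin d) ℝ) :
    sInf {v : ℝ | ∃ T w, InU a b T ∧ (∀ r, w r ∈ Set.Icc (0:ℝ) 1) ∧
        v = FR q α lam CX CY X Y T w}
      = sInf {v : ℝ | ∃ T, InU a b T ∧
        v = (∑ r, ridgeG α lam (score q X Y T r)) + α * gwTerm q CX CY T} :=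
  ridge_fsFGW_reduction_general n m d q α lam hα hlam a b CX CY X Y
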